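/- Let P be a special poset. Then sat*(n, P) = O(n); that is, there exists a constant C (depending only on P) such that sat*(n, P) ≤ C · n for all sufficiently large n. -/

import Mathlib

open Finset Filter

/-- An induced copy of the poset `α` inside the family `𝒜` of subsets of `Fin n`
(representing `[n] = {1,…,n}`): an injective map `f : α → Finset (Fin n)` with image
contained in `𝒜` such that `a ≤ b ↔ f a ⊆ f b`. -/
def IsInducedCopy {α : Type*} [PartialOrder α] {n : ℕ}
    (𝒜 : Finset (Finset (Fin n))) (f : α → Finset (Fin n)) : Prop :=
  Function.Injective f ∧ (∀ a, f a ∈ 𝒜) ∧ ∀ a b : α, a ≤ b ↔ f a ⊆ f b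

/-- The family `𝒜` contains an induced copy of the poset `α`. -/
def ContainsCopy (α : Type*) [PartialOrder α] {n : ℕ}
    (𝒜 : Finset (Finset (Fin n))) : Prop :=
  ∃ f : α → Finset (Fin n), IsInducedCopy 𝒜 f

/-- `𝒜` is an `α`-saturated family: it contains no induced copy of `α`, but adding any
set not in `𝒜` creates an induced copy of `α`. -/
def IsSaturatedFamily (α : Type*) [PartialOrder α] {n : ℕ}
    (𝒜 : Finset (Finset (Fin n))) : Prop :=
  ¬ ContainsCopy α 𝒜 ∧
    ∀ S : Finset (Fin n), S ∉ 𝒜 → ContainsCopy α (insert S 𝒜)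

/-- The induced saturation number `sat*(n, α)`: the minimum size of an `α`-saturated
family of subsets of `[n]`. -/
noncomputable def satStar (α : Type*) [PartialOrder α] (n : ℕ) : ℕ :=
  sInf {k : ℕ | ∃ 𝒜 : Finset (Finset (Fin n)), IsSaturatedFamily α 𝒜 ∧ 𝒜.card = k}

/-- A poset is special if it consists of an element `z` incomparable to every other
element, together with the rest of the poset, which has both a greatest and a least
element. -/
def IsSpecial (α : Type*) [PartialOrder α] : Prop :=
  ∃ z : α, (∀ x : α, x ≠ z → ¬ x ≤ z ∧ ¬ z ≤ x) ∧
    (∃ t : α, t ≠ z ∧ ∀ x : α, x ≠ z → x ≤ t) ∧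
    (∃ b : α, b ≠ z ∧ ∀ x : α, x ≠ z → b ≤ x)

/-!
Let `z` be the element of `P` incomparable to all others and `K = |P|`. Cut `[n]` into
blocks of length `K`; in the block starting at `K * a` embed `P` as the family of sets
`[0, K a) ∪ {K a + e(y) : y ≤ x}`, where `e : P ≃ Fin K`. Sets from different blocks are
nested, so a copy of `P` in the union `𝒢` of the embeddings of `P \ {z}` would have to put all
`K` elements of `P` into the `K - 1` sets of the block containing the image of `z`. Extend `𝒢` to a
`P`-saturated family `𝒜`. A member `S` of `𝒜` cannot straddle a block (contain none of
`[0, K a)` and lie outside `[0, K (a + 1))`), for then `S` together with that block would be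
an induced copy of `P`. Hence every `S ∈ 𝒜` is squeezed between `[0, p)` and `[0, p + 2K)`
for some `p ≤ n`, and there are at most `(n + 1) 2^(2K)` such sets.
-/

open scoped Classical

namespace InducedSaturation

section Saturation

variable {α : Type*} [PartialOrder α] {n : ℕ}

lemma isInducedCopy_of_subset_iff {𝒜 : Finset (Finset (Fin n))} {f : α → Finset (Fin n)}
    (hmem : ∀ a, f a ∈ 𝒜) (hf : ∀ a b, f a ⊆ f b ↔ a ≤ b) : IsInducedCopy 𝒜 f :=
  ⟨fun a b hab => le_antisymm ((hf a b).1 hab.le) ((hf b a).1 hab.ge), hmem,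
    fun a b => (hf a b).symm⟩

lemma exists_isSaturatedFamily_superset {𝒜₀ : Finset (Finset (Fin n))}
    (h𝒜₀ : ¬ ContainsCopy α 𝒜₀) : ∃ 𝒜, 𝒜₀ ⊆ 𝒜 ∧ IsSaturatedFamily α 𝒜 := by
  let 𝒮 : Finset (Finset (Finset (Fin n))) := {𝒜 | 𝒜₀ ⊆ 𝒜 ∧ ¬ ContainsCopy α 𝒜}
  obtain ⟨𝒜, h𝒜, hmax⟩ := 𝒮.exists_max_image Finset.card ⟨𝒜₀, by simpa [𝒮] using h𝒜₀⟩
  simp only [𝒮, mem_filter, mem_univ, true_and] at h𝒜 hmax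
  refine ⟨𝒜, h𝒜.1, h𝒜.2, fun S hS => ?_⟩
  by_contra hfree
  have := hmax (insert S 𝒜) ⟨h𝒜.1.trans (subset_insert S 𝒜), hfree⟩
  rw [card_insert_of_notMem hS] at this
  omega

lemma satStar_le_card {𝒜 : Finset (Finset (Fin n))} (h : IsSaturatedFamily α 𝒜) :
    satStar α n ≤ 𝒜.card :=
  Nat.sInf_le ⟨𝒜, h, rfl⟩

lemma containsCopy_of_isolated {z : α} (hz : ∀ x, x ≠ z → ¬ x ≤ z ∧ ¬ z ≤ x)
    {𝒜 : Finset (Finset (Fin n))} {g : α → Finset (Fin n)} (hg : ∀ x y, g x ⊆ g y ↔ x ≤ y)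
    (hg𝒜 : ∀ x, x ≠ z → g x ∈ 𝒜) {S : Finset (Fin n)} (hS𝒜 : S ∈ 𝒜)
    (hS : ∀ x, x ≠ z → ¬ g x ⊆ S ∧ ¬ S ⊆ g x) : ContainsCopy α 𝒜 := by
  refine ⟨Function.update g z S, isInducedCopy_of_subset_iff (fun x => ?_) fun x y => ?_⟩
  · by_cases hx : x = z
    · simpa [hx] using hS𝒜
    · simpa [hx] using hg𝒜 x hx
  · by_cases hx : x = z <;> by_cases hy : y = z
    · simp [hx, hy]
    · simpa [hx, hy] using iff_of_false (hS y hy).2 (hz y hy).2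
    · simpa [hx, hy] using iff_of_false (hS x hx).1 (hz x hx).1
    · simpa [hx, hy] using hg x y

end Saturation

section InitialSegments

def initSeg (n j : ℕ) : Finset (Fin n) := {v | (v : ℕ) < j}

variable {n : ℕ}

@[simp]
lemma mem_initSeg {j : ℕ} {v : Fin n} : v ∈ initSeg n j ↔ (v : ℕ) < j := by
  simp [initSeg]

lemma card_initSeg (j : ℕ) : (initSeg n j).card = min n j :=
  Fin.card_filter_val_lt

lemma initSeg_mono {j j' : ℕ} (h : j ≤ j') : initSeg n j ⊆ initSeg n j' := fun v hv => by
  simp only [mem_initSeg] at hv ⊢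
  omega

def band (n w : ℕ) : Finset (Finset (Fin n)) :=
  (range (n + 1)).biUnion fun p => Icc (initSeg n p) (initSeg n (p + w))

lemma mem_band {w p : ℕ} (hp : p ≤ n) {S : Finset (Fin n)} (h₁ : initSeg n p ⊆ S)
    (h₂ : S ⊆ initSeg n (p + w)) : S ∈ band n w :=
  mem_biUnion.2 ⟨p, mem_range.2 (Nat.lt_succ_of_le hp), mem_Icc.2 ⟨h₁, h₂⟩⟩

lemma card_band_le (w : ℕ) : (band n w).card ≤ (n + 1) * 2 ^ w := by
  refine card_biUnion_le.trans <| (sum_le_sum (g := fun _ => 2 ^ w) fun p _ => ?_).trans (by simp)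
  rw [card_Icc_finset (initSeg_mono (Nat.le_add_right p w)), card_initSeg, card_initSeg]
  exact Nat.pow_le_pow_right (by norm_num) (by omega)

lemma mem_band_of_not_straddle {K : ℕ} (hK : 0 < K) {S : Finset (Fin n)}
    (hS : ∀ a, K * (a + 1) ≤ n → initSeg n (K * a) ⊆ S ∨ S ⊆ initSeg n (K * (a + 1))) :
    S ∈ band n (2 * K) := by
  by_cases hfull : Sᶜ.Nonempty
  swap
  · have hS : S = univ := by simpa using hfull
    refine mem_band le_rfl (by simp [hS]) fun v _ => ?_
    simp [v.isLt.trans_le (Nat.le_add_right n _)]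
  set p := Sᶜ.min' hfull
  have hpS : p ∉ S := mem_compl.1 (Sᶜ.min'_mem hfull)
  refine mem_band p.isLt.le (fun v hv => ?_) fun q hq => ?_
  · by_contra hvS
    exact absurd (Sᶜ.min'_le v (mem_compl.2 hvS)) (not_le.2 (mem_initSeg.1 hv))
  · by_contra hqp
    rw [mem_initSeg, not_lt] at hqp
    -- the first block boundary above `p`
    set a := (p : ℕ) / K + 1
    have hpa : (p : ℕ) < K * a := Nat.lt_mul_div_succ _ hK
    have haK : K * a ≤ p + K := by
      have h₁ := Nat.div_mul_le_self (p : ℕ) K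
      have h₂ : K * a = (p : ℕ) / K * K + K := by simp only [a]; ring
      omega
    have hqa : K * (a + 1) ≤ q := by rw [mul_add, mul_one]; omega
    rcases hS a (hqa.trans q.isLt.le) with h | h
    · exact hpS (h (mem_initSeg.2 hpa))
    · exact absurd (mem_initSeg.1 (h hq)) (not_lt.2 hqa)

end InitialSegments

section Gadgets

variable {P : Type*} [PartialOrder P] [Fintype P] {n : ℕ}

noncomputable def gadget (n a : ℕ) (x : P) : Finset (Fin n) :=
  {v | (v : ℕ) < Fintype.card P * a ∨
    ∃ y ≤ x, (v : ℕ) = Fintype.card P * a + Fintype.equivFin P y}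

lemma mem_gadget {a : ℕ} {x : P} {v : Fin n} :
    v ∈ gadget n a x ↔ (v : ℕ) < Fintype.card P * a ∨
      ∃ y ≤ x, (v : ℕ) = Fintype.card P * a + Fintype.equivFin P y := by
  simp [gadget]

lemma initSeg_subset_gadget (a : ℕ) (x : P) :
    initSeg n (Fintype.card P * a) ⊆ gadget n a x :=
  fun _ hv => mem_gadget.2 (Or.inl (mem_initSeg.1 hv))

lemma gadget_subset_initSeg (a : ℕ) (x : P) :
    gadget n a x ⊆ initSeg n (Fintype.card P * (a + 1)) := fun _ hv => by
  rw [mem_initSeg, mul_add, mul_one]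
  rcases mem_gadget.1 hv with h | ⟨y, -, h⟩
  · omega
  · have := (Fintype.equivFin P y).isLt
    omega

lemma gadget_subset_gadget_iff {a : ℕ} (ha : Fintype.card P * (a + 1) ≤ n) {x y : P} :
    gadget n a x ⊆ gadget n a y ↔ x ≤ y := by
  refine ⟨fun h => ?_, fun hxy v hv => ?_⟩
  · have hlt : Fintype.card P * a + Fintype.equivFin P x < n := by
      have := (Fintype.equivFin P x).isLt
      rw [mul_add, mul_one] at ha
      omega
    rcases mem_gadget.1 (h (mem_gadget.2 (Or.inr ⟨x, le_rfl, rfl⟩) : ⟨_, hlt⟩ ∈ _))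
      with h' | ⟨x', hx'y, hx'⟩
    · simp at h'
    · have : x = x' := (Fintype.equivFin P).injective (Fin.ext (by simpa using hx'))
      exact this ▸ hx'y
  · rcases mem_gadget.1 hv with h | ⟨x', hx'x, h⟩
    · exact mem_gadget.2 (Or.inl h)
    · exact mem_gadget.2 (Or.inr ⟨x', hx'x.trans hxy, h⟩)

lemma gadget_subset_gadget_of_lt {a c : ℕ} (hac : a < c) (x y : P) :
    gadget n a x ⊆ gadget n c y :=
  (gadget_subset_initSeg a x).trans <|
    (initSeg_mono (Nat.mul_le_mul_left _ hac)).trans (initSeg_subset_gadget c y)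

noncomputable def gadgetFamily (z : P) (n : ℕ) : Finset (Finset (Fin n)) :=
  ({a ∈ range n | Fintype.card P * (a + 1) ≤ n}).biUnion fun a => (univ.erase z).image (gadget n a)

lemma mem_gadgetFamily {z : P} {S : Finset (Fin n)} :
    S ∈ gadgetFamily z n ↔
      ∃ a, Fintype.card P * (a + 1) ≤ n ∧ ∃ x, x ≠ z ∧ gadget n a x = S := by
  have hK : 0 < Fintype.card P := Fintype.card_pos_iff.2 ⟨z⟩
  simp only [gadgetFamily, mem_biUnion, mem_filter, mem_range, mem_image, mem_erase, mem_univ,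
    and_true]
  refine exists_congr fun a => and_congr_left fun _ => and_iff_right_of_imp fun ha => ?_
  nlinarith

lemma not_containsCopy_gadgetFamily {z : P} (hz : ∀ x, x ≠ z → ¬ x ≤ z ∧ ¬ z ≤ x) :
    ¬ ContainsCopy P (gadgetFamily z n) := by
  rintro ⟨f, hf, hmem, hle⟩
  obtain ⟨a₀, -, x₀, hx₀, hfz⟩ := mem_gadgetFamily.1 (hmem z)
  have hmaps : ∀ x ∈ univ.erase z, f x ∈ ((univ.erase z).erase x₀).image (gadget n a₀) := by
    intro x hx
    have hxz := ne_of_mem_erase hx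
    obtain ⟨a, -, y, hy, hfx⟩ := mem_gadgetFamily.1 (hmem x)
    have hinc : ¬ f x ⊆ f z ∧ ¬ f z ⊆ f x :=
      ⟨fun h => (hz x hxz).1 ((hle x z).2 h), fun h => (hz x hxz).2 ((hle z x).2 h)⟩
    rw [← hfz, ← hfx] at hinc
    have ha : a = a₀ := by
      by_contra hne
      rcases Nat.lt_or_gt_of_ne hne with h | h
      · exact hinc.1 (gadget_subset_gadget_of_lt h y x₀)
      · exact hinc.2 (gadget_subset_gadget_of_lt h x₀ y)
    subst ha
    have hyx₀ : y ≠ x₀ := by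
      rintro rfl
      exact hinc.1 subset_rfl
    exact mem_image.2 ⟨y, mem_erase.2 ⟨hyx₀, mem_erase.2 ⟨hy, mem_univ y⟩⟩, hfx⟩
  -- `f` injects the `K - 1` elements other than `z` into fewer than `K - 1` sets
  have := card_le_card_of_injOn f hmaps hf.injOn
  have := card_erase_lt_of_mem (mem_erase.2 ⟨hx₀, mem_univ x₀⟩)
  have := card_image_le (s := (univ.erase z).erase x₀) (f := gadget n a₀)
  omega

lemma mem_band_of_gadgetFamily_subset {z : P} (hz : ∀ x, x ≠ z → ¬ x ≤ z ∧ ¬ z ≤ x)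
    {𝒜 : Finset (Finset (Fin n))} (h𝒜 : gadgetFamily z n ⊆ 𝒜) (hfree : ¬ ContainsCopy P 𝒜)
    {S : Finset (Fin n)} (hS : S ∈ 𝒜) : S ∈ band n (2 * Fintype.card P) := by
  refine mem_band_of_not_straddle (Fintype.card_pos_iff.2 ⟨z⟩) fun a ha => ?_
  by_contra! hstraddle
  refine hfree (containsCopy_of_isolated hz (fun x y => gadget_subset_gadget_iff ha)
    (fun x hx => h𝒜 (mem_gadgetFamily.2 ⟨a, ha, x, hx, rfl⟩)) hS fun x _ => ⟨?_, ?_⟩)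
  · exact fun h => hstraddle.1 ((initSeg_subset_gadget a x).trans h)
  · exact fun h => hstraddle.2 (h.trans (gadget_subset_initSeg a x))

end Gadgets

end InducedSaturation

open InducedSaturation in
/-- If `P` is a special poset then `sat*(n, P) = O(n)`: there is a
constant `C` with `sat*(n, P) ≤ C * n` for all sufficiently large `n`. -/
theorem statement6 (P : Type*) [PartialOrder P] [Fintype P] (hP : IsSpecial P) :
    ∃ C N : ℕ, ∀ n ≥ N, satStar P n ≤ C * n := by
  obtain ⟨z, hz, -⟩ := hP
  refine ⟨2 ^ (2 * Fintype.card P + 1), 1, fun n hn => ?_⟩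
  obtain ⟨𝒜, h𝒜, hsat⟩ :=
    exists_isSaturatedFamily_superset (not_containsCopy_gadgetFamily (n := n) hz)
  calc satStar P n ≤ 𝒜.card := satStar_le_card hsat
    _ ≤ (band n (2 * Fintype.card P)).card :=
      card_le_card fun S hS => mem_band_of_gadgetFamily_subset hz h𝒜 hsat.1 hS
    _ ≤ (n + 1) * 2 ^ (2 * Fintype.card P) := card_band_le _
    _ ≤ 2 ^ (2 * Fintype.card P + 1) * n := by
      have := Nat.mul_le_mul_right (2 ^ (2 * Fintype.card P)) (show n + 1 ≤ 2 * n by omega)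
      rw [pow_succ]
      linarith
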